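/- For every real ν > 0 and every real u > 0, the second q-Bessel function satisfies the recurrence u^{−(ν−1)} ( J^{(2)}_{ν+1}(qu|q²) + J^{(2)}_{ν−1}(qu|q²) ) = [2ν]_q · (qu)^{−ν} J^{(2)}_ν(u|q²). -/

import Mathlib

open scoped BigOperators

noncomputable section

/-- The q-number `[u]_q = (q^u - 1)/(q - 1)`. -/
def qNum (q u : ℝ) : ℝ := (q ^ u - 1) / (q - 1)

/-- The q-factorial `[n]_q! = ∏_{i=1}^n [i]_q`. -/
def qFact (q : ℝ) (n : ℕ) : ℝ := ∏ i ∈ Finset.range n, qNum q ((i : ℝ) + 1)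

/-- The q-Gamma function `Γ_q(t) = (1-q)^{1-t} ∏_{k=0}^∞ (1-q^{k+1})/(1-q^{k+t})`. -/
def qGamma (q t : ℝ) : ℝ :=
  (1 - q) ^ (1 - t) * ∏' k : ℕ, (1 - q ^ (k + 1)) / (1 - q ^ ((k : ℝ) + t))

/-- The q-derivative `∂^q_t f(t) = (f(qt) - f(t))/((q-1)t)`.
The `q⁻¹`-derivative is `qDeriv q⁻¹`. -/
def qDeriv (q : ℝ) (f : ℝ → ℝ) (t : ℝ) : ℝ := (f (q * t) - f t) / ((q - 1) * t)

/-- The q-Pochhammer symbol `(a; q)_k = ∏_{l=0}^{k-1} (1 - a q^l)`. -/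
def qPoch (a q : ℝ) (k : ℕ) : ℝ := ∏ l ∈ Finset.range k, (1 - a * q ^ l)

/-- The q-exponential `E_q(t) = ∑_{j=0}^∞ q^{j(j-1)/2} t^j/[j]_q!`. -/
def qExpE (q t : ℝ) : ℝ := ∑' j : ℕ, q ^ (j * (j - 1) / 2) * t ^ j / qFact q j

/-- `e_q(-u) := 1/E_q(u)` (intended for `u ≥ 0`); `qExpe q u` denotes `e_q(-u)`. -/
def qExpe (q u : ℝ) : ℝ := (qExpE q u)⁻¹

/-- The first q-Bessel function `J^{(1)}_ν(x|q²)`. -/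
def qBessel1 (q ν x : ℝ) : ℝ :=
  (x / (1 + q)) ^ ν *
    ∑' i : ℕ, (-1 : ℝ) ^ i / (qFact (q ^ 2) i * qGamma (q ^ 2) ((i : ℝ) + ν + 1)) *
      (x / (1 + q)) ^ (2 * i)

/-- The second q-Bessel function `J^{(2)}_ν(x|q²)`. -/
def qBessel2 (q ν x : ℝ) : ℝ :=
  q ^ (ν ^ 2) * (x / (1 + q)) ^ ν *
    ∑' i : ℕ, q ^ (2 * (i : ℝ) * ((i : ℝ) + ν)) * (-1 : ℝ) ^ i /
        (qFact (q ^ 2) i * qGamma (q ^ 2) ((i : ℝ) + ν + 1)) *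
      (x / (1 + q)) ^ (2 * i)

/-- The q-Laguerre polynomial `𝓛^{(α)}_j(u|q²)`. -/
def qLaguerre (q α : ℝ) (j : ℕ) (u : ℝ) : ℝ :=
  ∑ i ∈ Finset.range (j + 1),
    q ^ ((j - i) * (j - i + 1)) * (-u) ^ i / (qFact (q ^ 2) (j - i) * qFact (q ^ 2) i) *
      (qPoch (q ^ (2 * (i : ℝ) + 2 * α + 2)) (q ^ 2) (j - i) / (1 - q ^ 2) ^ (j - i))

/-- The q-Laguerre polynomial `𝓛^{(α)}_j(u|q^{-2})`. -/
def qLaguerreInv (q α : ℝ) (j : ℕ) (u : ℝ) : ℝ :=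
  q ^ (-(j : ℝ) * ((j : ℝ) + 1 + 2 * α)) *
    ∑ i ∈ Finset.range (j + 1),
      q ^ (2 * (i : ℝ) * ((i : ℝ) + α)) * (-u) ^ i / (qFact (q ^ 2) (j - i) * qFact (q ^ 2) i) *
        (qPoch (q ^ (2 * (i : ℝ) + 2 * α + 2)) (q ^ 2) (j - i) / (1 - q ^ 2) ^ (j - i))

/-- The finite Jackson q-integral `∫_0^a f(t) d_q t = (1-q) a ∑_{k=0}^∞ f(q^k a) q^k`. -/
def jackson (q a : ℝ) (f : ℝ → ℝ) : ℝ := (1 - q) * a * ∑' k : ℕ, f (q ^ k * a) * q ^ k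

/-- The infinite Jackson q-integral `∫_0^{γ·∞} f(t) d_q t = (1-q) γ ∑_{k=-∞}^∞ f(q^k γ) q^k`. -/
def jacksonInf (q γ : ℝ) (f : ℝ → ℝ) : ℝ := (1 - q) * γ * ∑' k : ℤ, f (q ^ k * γ) * q ^ k

/-- The first q-Hankel transform `𝓗̄^{q,β}_ν`. -/
def hankel1 (q μ ν β : ℝ) (f : ℝ → ℝ) (t : ℝ) : ℝ :=
  (1 + q) / μ * jackson q (Real.sqrt (μ / ((1 - q ^ 2) * β)))
    (fun r => qBessel1 q ν ((1 + q) / μ * (r * t)) / (r * t) ^ ν * r ^ (2 * ν + 1) * f r)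

/-- The second q-Hankel transform `𝓗^{q,γ}_ν`. -/
def hankel2 (q μ ν γ : ℝ) (f : ℝ → ℝ) (r : ℝ) : ℝ :=
  (1 + q) / μ * jacksonInf q γ
    (fun t => qBessel2 q ν (q * ((1 + q) / μ) * (r * t)) / (r * t) ^ ν * t ^ (2 * ν + 1) * f t)

/-!
With `w = x / (1 + q)` one has `J^{(2)}_ν(x|q²) = q^{ν²} w^ν S_ν(w)` for a power series `S_ν` in `w²`.
Once the monomial prefactors cancel, the recurrence becomes the power series identity
`(1 + q) (q^{4ν} (q w)² S_{ν+1}(q w) + S_{ν-1}(q w)) = [2ν]_q S_ν(w)`, which holds coefficientwise by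
`Γ_{q²}(t + 1) = [t]_{q²} Γ_{q²}(t)`, `[i + ν + 1]_{q²} = [ν]_{q²} + q^{2ν} [i + 1]_{q²}` and
`[2ν]_q = (1 + q) [ν]_{q²}`. The functional equation of `Γ_q` follows from
`Γ_q(t) = (1 - q)^{1 - t} (q; q)_∞ / (q^t; q)_∞` and `(a; q)_∞ = (1 - a) (a q; q)_∞`.
-/

open Filter

section

variable {p q : ℝ}

theorem qNum_add (hp : 0 < p) (s t : ℝ) : qNum p (s + t) = qNum p s + p ^ s * qNum p t := by
  simp only [qNum, Real.rpow_add hp]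
  ring

theorem qNum_two_mul (hq0 : 0 < q) (hq1 : q ≠ 1) (t : ℝ) :
    qNum q (2 * t) = (1 + q) * qNum (q ^ 2) t := by
  have h1 : q - 1 ≠ 0 := sub_ne_zero.2 hq1
  rw [qNum, qNum, show 2 * t = ((2 : ℕ) : ℝ) * t by norm_num, Real.rpow_natCast_mul hq0.le,
    show q ^ 2 - 1 = (q - 1) * (1 + q) by ring]
  field_simp

theorem qNum_pos (hq0 : 0 < q) (hq1 : q < 1) {t : ℝ} (ht : 0 < t) : 0 < qNum q t :=
  div_pos_of_neg_of_neg (by linarith [Real.rpow_lt_one hq0.le hq1 ht]) (by linarith)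

theorem one_le_qNum (hq0 : 0 < q) (hq1 : q < 1) {t : ℝ} (ht : 1 ≤ t) : 1 ≤ qNum q t := by
  have := Real.rpow_le_rpow_of_exponent_ge hq0 hq1.le ht
  rw [Real.rpow_one] at this
  rw [qNum, le_div_iff_of_neg (by linarith)]
  linarith

theorem qFact_succ (n : ℕ) : qFact q (n + 1) = qFact q n * qNum q ((n : ℝ) + 1) :=
  Finset.prod_range_succ _ _

def qPochInf (a q : ℝ) : ℝ := ∏' k : ℕ, (1 - a * q ^ k)

variable {a : ℝ}

theorem one_sub_mul_pow_pos (ha : a < 1) (hq0 : 0 ≤ q) (hq1 : q ≤ 1) (k : ℕ) :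
    0 < 1 - a * q ^ k := by
  rcases le_or_gt a 0 with ha0 | ha0
  · nlinarith [pow_nonneg hq0 k]
  · nlinarith [pow_le_one₀ hq0 hq1 (n := k)]

theorem summable_log_one_sub_mul_pow (a : ℝ) (hq0 : 0 ≤ q) (hq1 : q < 1) :
    Summable fun k : ℕ => Real.log (1 - a * q ^ k) := by
  simpa [sub_eq_add_neg] using
    Real.summable_log_one_add_of_summable ((summable_geometric_of_lt_one hq0 hq1).mul_left (-a))

theorem hasProd_qPochInf (ha : a < 1) (hq0 : 0 ≤ q) (hq1 : q < 1) :
    HasProd (fun k : ℕ => 1 - a * q ^ k) (Real.exp (∑' k : ℕ, Real.log (1 - a * q ^ k))) :=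
  Real.hasProd_of_hasSum_log (one_sub_mul_pow_pos ha hq0 hq1.le)
    (summable_log_one_sub_mul_pow a hq0 hq1).hasSum

theorem qPochInf_eq_exp (ha : a < 1) (hq0 : 0 ≤ q) (hq1 : q < 1) :
    qPochInf a q = Real.exp (∑' k : ℕ, Real.log (1 - a * q ^ k)) :=
  (hasProd_qPochInf ha hq0 hq1).tprod_eq

theorem qPochInf_pos (ha : a < 1) (hq0 : 0 ≤ q) (hq1 : q < 1) : 0 < qPochInf a q := by
  rw [qPochInf_eq_exp ha hq0 hq1]
  positivity

theorem qPochInf_eq_one_sub_mul (ha : a < 1) (hq0 : 0 ≤ q) (hq1 : q < 1) :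
    qPochInf a q = (1 - a) * qPochInf (a * q) q := by
  have haq : a * q < 1 := by simpa using one_sub_mul_pow_pos ha hq0 hq1.le 1
  have hshift : (fun k : ℕ => 1 - a * q ^ (k + 1)) = fun k => 1 - a * q * q ^ k :=
    funext fun k => by ring
  rw [qPochInf, tprod_eq_zero_mul' (hshift ▸ (hasProd_qPochInf haq hq0 hq1).multipliable),
    hshift, pow_zero, mul_one, qPochInf]

theorem qGamma_eq_qPochInf (hq0 : 0 < q) (hq1 : q < 1) {t : ℝ} (ht : 0 < t) :
    qGamma q t = (1 - q) ^ (1 - t) * (qPochInf q q / qPochInf (q ^ t) q) := by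
  have hqt : q ^ t < 1 := Real.rpow_lt_one hq0.le hq1 ht
  have hterm : ∀ k : ℕ, (1 - q ^ (k + 1)) / (1 - q ^ ((k : ℝ) + t)) =
      (1 - q * q ^ k) / (1 - q ^ t * q ^ k) := fun k => by
    rw [pow_succ', Real.rpow_add hq0, Real.rpow_natCast, mul_comm (q ^ k)]
  have hnum := one_sub_mul_pow_pos hq1 hq0.le hq1.le
  have hden := one_sub_mul_pow_pos hqt hq0.le hq1.le
  have hlog : HasSum (fun k : ℕ => Real.log ((1 - q * q ^ k) / (1 - q ^ t * q ^ k)))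
      ((∑' k : ℕ, Real.log (1 - q * q ^ k)) - ∑' k : ℕ, Real.log (1 - q ^ t * q ^ k)) := by
    refine ((summable_log_one_sub_mul_pow q hq0.le hq1).hasSum.sub
      (summable_log_one_sub_mul_pow (q ^ t) hq0.le hq1).hasSum).congr_fun fun k => ?_
    exact Real.log_div (hnum k).ne' (hden k).ne'
  rw [qGamma, tprod_congr hterm,
    (Real.hasProd_of_hasSum_log (fun k => div_pos (hnum k) (hden k)) hlog).tprod_eq,
    Real.exp_sub, ← qPochInf_eq_exp hq1 hq0.le hq1, ← qPochInf_eq_exp hqt hq0.le hq1]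

theorem qGamma_add_one (hq0 : 0 < q) (hq1 : q < 1) {t : ℝ} (ht : 0 < t) :
    qGamma q (t + 1) = qNum q t * qGamma q t := by
  have hqt : q ^ t < 1 := Real.rpow_lt_one hq0.le hq1 ht
  have hP := qPochInf_pos (Real.rpow_lt_one hq0.le hq1 (by linarith : 0 < t + 1)) hq0.le hq1
  have h1q : 1 - q ≠ 0 := by linarith
  have hq1' : q - 1 ≠ 0 := by linarith
  have h1qt : 1 - q ^ t ≠ 0 := by linarith
  rw [qGamma_eq_qPochInf hq0 hq1 (by linarith), qGamma_eq_qPochInf hq0 hq1 ht,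
    qPochInf_eq_one_sub_mul hqt hq0.le hq1, ← Real.rpow_add_one hq0.ne', qNum,
    show 1 - t = (1 - (t + 1)) + 1 by ring, Real.rpow_add_one h1q]
  field_simp
  ring

end

def qBessel2Coeff (q ν : ℝ) (i : ℕ) : ℝ :=
  q ^ (2 * (i : ℝ) * ((i : ℝ) + ν)) * (-1 : ℝ) ^ i /
    (qFact (q ^ 2) i * qGamma (q ^ 2) ((i : ℝ) + ν + 1))

def qBessel2Series (q ν w : ℝ) : ℝ := ∑' i : ℕ, qBessel2Coeff q ν i * w ^ (2 * i)

section

variable {q ν : ℝ}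

theorem qBessel2_eq (x : ℝ) :
    qBessel2 q ν x = q ^ (ν ^ 2) * (x / (1 + q)) ^ ν * qBessel2Series q ν (x / (1 + q)) :=
  rfl

theorem qBessel2Coeff_zero : qBessel2Coeff q ν 0 = (qGamma (q ^ 2) (ν + 1))⁻¹ := by
  simp [qBessel2Coeff, qFact]

theorem qBessel2Coeff_succ (hq0 : 0 < q) (hq1 : q < 1) {i : ℕ} (hi : 0 < (i : ℝ) + ν + 1) :
    qBessel2Coeff q ν (i + 1) =
      -((q ^ 2) ^ ν * q ^ (4 * i + 2) /
        (qNum (q ^ 2) ((i : ℝ) + 1) * qNum (q ^ 2) ((i : ℝ) + ν + 1))) *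
        qBessel2Coeff q ν i := by
  have hexp : q ^ (2 * ((i + 1 : ℕ) : ℝ) * (((i + 1 : ℕ) : ℝ) + ν)) =
      q ^ (2 * (i : ℝ) * ((i : ℝ) + ν)) * (q ^ 2) ^ ν * q ^ (4 * i + 2) := by
    rw [← Real.rpow_natCast_mul hq0.le, ← Real.rpow_natCast q (4 * i + 2),
      ← Real.rpow_add hq0, ← Real.rpow_add hq0]
    push_cast
    ring_nf
  have hΓ : qGamma (q ^ 2) (((i + 1 : ℕ) : ℝ) + ν + 1) =
      qNum (q ^ 2) ((i : ℝ) + ν + 1) * qGamma (q ^ 2) ((i : ℝ) + ν + 1) := by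
    rw [← qGamma_add_one (by positivity) (pow_lt_one₀ hq0.le hq1 two_ne_zero) hi]
    push_cast
    ring_nf
  rw [qBessel2Coeff, qBessel2Coeff, hexp, hΓ, qFact_succ, pow_succ]
  ring

theorem qBessel2Coeff_add_one (hq0 : 0 < q) (hq1 : q < 1) {i : ℕ} (hi : 0 < (i : ℝ) + ν + 1) :
    qBessel2Coeff q (ν + 1) i =
      q ^ (2 * i) / qNum (q ^ 2) ((i : ℝ) + ν + 1) * qBessel2Coeff q ν i := by
  have hexp : q ^ (2 * (i : ℝ) * ((i : ℝ) + (ν + 1))) =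
      q ^ (2 * (i : ℝ) * ((i : ℝ) + ν)) * q ^ (2 * i) := by
    rw [← Real.rpow_natCast q (2 * i), ← Real.rpow_add hq0]
    push_cast
    ring_nf
  have hΓ : qGamma (q ^ 2) ((i : ℝ) + (ν + 1) + 1) =
      qNum (q ^ 2) ((i : ℝ) + ν + 1) * qGamma (q ^ 2) ((i : ℝ) + ν + 1) := by
    rw [← qGamma_add_one (by positivity) (pow_lt_one₀ hq0.le hq1 two_ne_zero) hi]
    ring_nf
  rw [qBessel2Coeff, qBessel2Coeff, hexp, hΓ]
  ring

theorem summable_qBessel2Coeff_mul_pow (hq0 : 0 < q) (hq1 : q < 1) (ν w : ℝ) :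
    Summable fun i : ℕ => qBessel2Coeff q ν i * w ^ (2 * i) := by
  have hq2 : q ^ 2 < 1 := pow_lt_one₀ hq0.le hq1 two_ne_zero
  have hsmall : ∀ᶠ i : ℕ in atTop, (q ^ 2) ^ ν * q ^ 2 * w ^ 2 * (q ^ 4) ^ i ≤ 1 / 2 := by
    have h := (tendsto_pow_atTop_nhds_zero_of_lt_one (by positivity)
      (pow_lt_one₀ hq0.le hq1 four_ne_zero)).const_mul ((q ^ 2) ^ ν * q ^ 2 * w ^ 2)
    rw [mul_zero] at h
    exact h.eventually_le_const one_half_pos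
  refine summable_of_ratio_norm_eventually_le one_half_lt_one ?_
  filter_upwards [hsmall, eventually_ge_atTop ⌈-ν⌉₊] with i hsmall hi
  have hiν : -ν ≤ i := Nat.ceil_le.1 hi
  have hM := one_le_qNum (by positivity) hq2 (by linarith [i.cast_nonneg (α := ℝ)] :
    (1 : ℝ) ≤ i + 1)
  have hN := one_le_qNum (by positivity) hq2 (by linarith : (1 : ℝ) ≤ i + ν + 1)
  have hratio : (q ^ 2) ^ ν * q ^ (4 * i + 2) / (qNum (q ^ 2) ((i : ℝ) + 1) *
      qNum (q ^ 2) ((i : ℝ) + ν + 1)) * w ^ 2 ≤ 1 / 2 := by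
    refine le_trans ?_ hsmall
    rw [div_mul_eq_mul_div, pow_add, pow_mul]
    exact div_le_self (by positivity) (one_le_mul_of_one_le_of_one_le hM hN) |>.trans_eq (by ring)
  have hstep : qBessel2Coeff q ν (i + 1) * w ^ (2 * (i + 1)) =
      -((q ^ 2) ^ ν * q ^ (4 * i + 2) / (qNum (q ^ 2) ((i : ℝ) + 1) *
        qNum (q ^ 2) ((i : ℝ) + ν + 1)) * w ^ 2) * (qBessel2Coeff q ν i * w ^ (2 * i)) := by
    rw [qBessel2Coeff_succ hq0 hq1 (by linarith)]
    ring
  rw [hstep, norm_mul, norm_neg, Real.norm_of_nonneg (by positivity)]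
  exact mul_le_mul_of_nonneg_right hratio (norm_nonneg _)

theorem qBessel2Coeff_recurrence_zero (hq0 : 0 < q) (hq1 : q < 1) (hν : 0 < ν) :
    (1 + q) * qBessel2Coeff q (ν - 1) 0 = qNum q (2 * ν) * qBessel2Coeff q ν 0 := by
  have hN : qNum (q ^ 2) ν ≠ 0 :=
    (qNum_pos (by positivity) (pow_lt_one₀ hq0.le hq1 two_ne_zero) hν).ne'
  rw [qBessel2Coeff_zero, qBessel2Coeff_zero, sub_add_cancel,
    qGamma_add_one (by positivity) (pow_lt_one₀ hq0.le hq1 two_ne_zero) hν,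
    qNum_two_mul hq0 hq1.ne, mul_inv, mul_assoc, mul_inv_cancel_left₀ hN]

theorem qBessel2Coeff_recurrence_succ (hq0 : 0 < q) (hq1 : q < 1) {i : ℕ}
    (hi : 0 < (i : ℝ) + ν + 1) :
    (1 + q) * (q ^ (4 * ν) * q ^ (2 * i + 2) * qBessel2Coeff q (ν + 1) i +
        q ^ (2 * i + 2) * qBessel2Coeff q (ν - 1) (i + 1)) =
      qNum q (2 * ν) * qBessel2Coeff q ν (i + 1) := by
  have hq2 : q ^ 2 < 1 := pow_lt_one₀ hq0.le hq1 two_ne_zero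
  have hM : qNum (q ^ 2) ((i : ℝ) + 1) ≠ 0 :=
    (qNum_pos (by positivity) hq2 (by positivity)).ne'
  have hN : qNum (q ^ 2) ((i : ℝ) + ν + 1) ≠ 0 := (qNum_pos (by positivity) hq2 hi).ne'
  have hP : q ^ (4 * ν) = ((q ^ 2) ^ ν) ^ 2 := by
    rw [← Real.rpow_mul_natCast (by positivity), ← Real.rpow_natCast_mul hq0.le]
    ring_nf
  have hN_eq : qNum (q ^ 2) ((i : ℝ) + ν + 1) =
      qNum (q ^ 2) ν + (q ^ 2) ^ ν * qNum (q ^ 2) ((i : ℝ) + 1) := by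
    rw [← qNum_add (by positivity), show ν + ((i : ℝ) + 1) = (i : ℝ) + ν + 1 by ring]
  have hlower : q ^ (2 * i + 2) * qBessel2Coeff q (ν - 1) (i + 1) =
      qNum (q ^ 2) ((i : ℝ) + ν + 1) * qBessel2Coeff q ν (i + 1) := by
    have h := qBessel2Coeff_add_one (ν := ν - 1) hq0 hq1 (i := i + 1) (by push_cast; linarith)
    rw [sub_add_cancel,
      show ((i + 1 : ℕ) : ℝ) + (ν - 1) + 1 = (i : ℝ) + ν + 1 by push_cast; ring] at h
    rw [h]
    field_simp
    ring
  rw [hlower, qBessel2Coeff_add_one hq0 hq1 hi, qBessel2Coeff_succ hq0 hq1 hi, hP,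
    qNum_two_mul hq0 hq1.ne]
  field_simp
  linear_combination -(qBessel2Coeff q ν i * q ^ (4 * i + 2)) * hN_eq

theorem qBessel2Series_recurrence (hq0 : 0 < q) (hq1 : q < 1) (hν : 0 < ν) (w : ℝ) :
    (1 + q) * (q ^ (4 * ν) * (q * w) ^ 2 * qBessel2Series q (ν + 1) (q * w) +
        qBessel2Series q (ν - 1) (q * w)) =
      qNum q (2 * ν) * qBessel2Series q ν w := by
  have hS := summable_qBessel2Coeff_mul_pow hq0 hq1
  have hterm : ∀ i : ℕ, (1 + q) * (q ^ (4 * ν) * (q * w) ^ 2 *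
      (qBessel2Coeff q (ν + 1) i * (q * w) ^ (2 * i)) +
        qBessel2Coeff q (ν - 1) (i + 1) * (q * w) ^ (2 * (i + 1))) =
      qNum q (2 * ν) * (qBessel2Coeff q ν (i + 1) * w ^ (2 * (i + 1))) := fun i => by
    linear_combination w ^ (2 * i + 2) *
      qBessel2Coeff_recurrence_succ (ν := ν) hq0 hq1 (i := i) (by positivity)
  have key := tsum_congr (L := .unconditional ℕ) hterm
  rw [tsum_mul_left,
    Summable.tsum_add ((hS _ _).mul_left _) ((summable_nat_add_iff 1).2 (hS _ _)),
    tsum_mul_left, tsum_mul_left] at key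
  rw [qBessel2Series, qBessel2Series, qBessel2Series, (hS (ν - 1) (q * w)).tsum_eq_zero_add,
    (hS ν w).tsum_eq_zero_add]
  linear_combination key + qBessel2Coeff_recurrence_zero hq0 hq1 hν

end

/-- recurrence for the second q-Bessel function:
`u^{-(ν-1)} (J^{(2)}_{ν+1}(qu|q²) + J^{(2)}_{ν-1}(qu|q²)) = [2ν]_q (qu)^{-ν} J^{(2)}_ν(u|q²)`
for `ν > 0` and `u > 0`. -/
theorem qBessel2_recurrence (q : ℝ) (hq0 : 0 < q) (hq1 : q < 1)
    (ν : ℝ) (hν : ν > 0) (u : ℝ) (hu0 : 0 < u) :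
    u ^ (-(ν - 1)) * (qBessel2 q (ν + 1) (q * u) + qBessel2 q (ν - 1) (q * u)) =
      qNum q (2 * ν) * ((q * u) ^ (-ν) * qBessel2 q ν u) := by
  obtain ⟨w, hw, rfl⟩ : ∃ w, 0 < w ∧ u = (1 + q) * w :=
    ⟨u / (1 + q), by positivity, by field_simp⟩
  have hx : (1 + q) * w / (1 + q) = w := by field_simp
  have hqx : q * ((1 + q) * w) / (1 + q) = q * w := by field_simp
  have hlow : ((1 + q) * w) ^ (-(ν - 1)) * (q ^ ((ν - 1) ^ 2) * (q * w) ^ (ν - 1)) =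
      (1 + q) * ((q * ((1 + q) * w)) ^ (-ν) * (q ^ (ν ^ 2) * w ^ ν)) := by
    refine Real.log_injOn_pos (Set.mem_Ioi.2 (by positivity)) (Set.mem_Ioi.2 (by positivity)) ?_
    simp (disch := positivity) only [Real.log_mul, Real.log_rpow]
    ring
  have hhigh : q ^ ((ν + 1) ^ 2) * (q * w) ^ (ν + 1) =
      q ^ (4 * ν) * (q * w) ^ 2 * (q ^ ((ν - 1) ^ 2) * (q * w) ^ (ν - 1)) := by
    rw [show (ν + 1) ^ 2 = 4 * ν + (ν - 1) ^ 2 by ring, show ν + 1 = 2 + (ν - 1) by ring,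
      Real.rpow_add hq0, Real.rpow_add (by positivity), Real.rpow_two]
    ring
  rw [qBessel2_eq, qBessel2_eq, qBessel2_eq, hx, hqx, hhigh]
  linear_combination (q ^ (4 * ν) * (q * w) ^ 2 * qBessel2Series q (ν + 1) (q * w) +
      qBessel2Series q (ν - 1) (q * w)) * hlow +
    (q * ((1 + q) * w)) ^ (-ν) * (q ^ (ν ^ 2) * w ^ ν) * qBessel2Series_recurrence hq0 hq1 hν w
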